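/- arXiv:1308.3649 — 2 statements merged into one kernel-verified Lean document; each statement's English description precedes it below -/
import Mathlib

section
/- The map x ↦ |x|^p on ℂ ≅ ℝ² is twice continuously differentiable for p ≥ 2, and its Hessian quadratic form at φ ∈ ℂ applied to a direction v ∈ ℂ equals p|φ|^{p-2}|v|² + p(p-2)|φ|^{p-4}(Re(φ v̄))², where the second term is interpreted as 0 when φ = 0 and p > 2. In particular the Hessian quadratic form is bounded above by p(p-1)|φ|^{p-2}|v|². -/
/-!
On a real inner product space the gradient of `‖x‖ ^ p` is `p ‖x‖^(p-2) x`, and away from `0` the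
product rule gives the Hessian `p ‖x‖^(p-2) ⟪v, w⟫ + p (p-2) ‖x‖^(p-4) ⟪x, v⟫ ⟪x, w⟫`. At `0` the
gradient differs from the linear map `p 0^(p-2) x` by `p (‖x‖^(p-2) - 0^(p-2)) x = o(‖x‖)`, and the
rank-one part of the Hessian has norm `p (p-2) ‖x‖^(p-2) → 0`; both use `p ≥ 2`. Cauchy–Schwarz,
`⟪x, v⟫² ≤ ‖x‖² ‖v‖²`, gives the upper bound, and on `ℂ` one has `⟪φ, v⟫ = Re (φ v̄)`.
-/

open Asymptotics Filter Topology
open scoped RealInnerProductSpace ComplexConjugate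

/-- The factor `p - 2` makes this hold at `t = 0, p = 2` too, where `0 ^ (-2) * 0 ^ 2 ≠ 0 ^ 0`. -/
theorem sub_two_mul_rpow_sub_four_mul_sq {t : ℝ} (ht : 0 ≤ t) (p : ℝ) :
    (p - 2) * (t ^ (p - 4) * t ^ 2) = (p - 2) * t ^ (p - 2) := by
  rcases eq_or_ne p 2 with rfl | hp
  · simp
  rw [← Real.rpow_natCast, ← Real.rpow_add' ht (by push_cast; contrapose! hp; linarith)]
  congr 2
  push_cast
  ring

section NormRpow

variable {E : Type*} [NormedAddCommGroup E] [InnerProductSpace ℝ E] {p : ℝ}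

theorem hasFDerivAt_norm_rpow_of_ne_zero (q : ℝ) {x : E} (hx : x ≠ 0) :
    HasFDerivAt (fun y : E ↦ ‖y‖ ^ q) ((q * ‖x‖ ^ (q - 2)) • innerSL ℝ x) x := by
  convert ((hasStrictFDerivAt_norm_sq x).rpow_const (p := q / 2) (by simp [hx])).hasFDerivAt
    using 1
  · ext y
    simp [← Real.rpow_natCast_mul (norm_nonneg _), mul_div_cancel₀]
  · simp_rw [← Real.rpow_natCast_mul (norm_nonneg _), ← Nat.cast_smul_eq_nsmul ℝ, smul_smul]
    ring_nf

/-- `innerSL ℝ` with its conjugate-linear type `E →L⋆[ℝ] _` replaced by the plainly bilinear one,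
so that it can be added to and compared with other bilinear maps. -/
noncomputable def realInnerSL : E →L[ℝ] E →L[ℝ] ℝ := innerSL ℝ

@[simp]
theorem realInnerSL_apply (v w : E) : realInnerSL v w = ⟪v, w⟫ := rfl

noncomputable def normRpowHessian (p : ℝ) (x : E) : E →L[ℝ] E →L[ℝ] ℝ :=
  (p * ‖x‖ ^ (p - 2)) • realInnerSL +
    (p * (p - 2) * ‖x‖ ^ (p - 4)) • (innerSL ℝ x).smulRight (innerSL ℝ x)

theorem normRpowHessian_apply (p : ℝ) (x v w : E) :
    normRpowHessian p x v w =
      p * ‖x‖ ^ (p - 2) * ⟪v, w⟫ + p * (p - 2) * ‖x‖ ^ (p - 4) * (⟪x, v⟫ * ⟪x, w⟫) := by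
  simp [normRpowHessian]

theorem fderiv_norm_rpow_eq_smul_realInnerSL (hp : 1 < p) :
    (fderiv ℝ fun y : E ↦ ‖y‖ ^ p) = fun y ↦ (p * ‖y‖ ^ (p - 2)) • realInnerSL y :=
  funext fun y ↦ fderiv_norm_rpow y hp

theorem hasFDerivAt_fderiv_norm_rpow_of_ne_zero (hp : 1 < p) {x : E} (hx : x ≠ 0) :
    HasFDerivAt (fderiv ℝ fun y : E ↦ ‖y‖ ^ p) (normRpowHessian p x) x := by
  rw [fderiv_norm_rpow_eq_smul_realInnerSL hp]
  refine (((hasFDerivAt_norm_rpow_of_ne_zero (p - 2) hx).const_mul p).smul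
    realInnerSL.hasFDerivAt).congr_fderiv ?_
  ext v w
  simp [normRpowHessian_apply, show p - 2 - 2 = p - 4 by ring]
  ring

theorem hasFDerivAt_fderiv_norm_rpow_zero (hp : 2 ≤ p) :
    HasFDerivAt (fderiv ℝ fun y : E ↦ ‖y‖ ^ p) (normRpowHessian p 0) 0 := by
  rw [fderiv_norm_rpow_eq_smul_realInnerSL (by linarith), hasFDerivAt_iff_isLittleO_nhds_zero]
  -- `t ↦ t ^ (p - 2)` is continuous at `0` because `p ≥ 2` (for `p = 2` it is constantly `1`)
  have hcoeff : Tendsto (fun y : E ↦ p * (‖y‖ ^ (p - 2) - ‖(0 : E)‖ ^ (p - 2))) (𝓝 0) (𝓝 0) := by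
    have : Continuous fun y : E ↦ p * (‖y‖ ^ (p - 2) - ‖(0 : E)‖ ^ (p - 2)) := by
      fun_prop (discharger := simp [sub_nonneg.2 hp])
    simpa using this.tendsto 0
  have := (isLittleO_one_iff ℝ).2 hcoeff |>.smul_isBigO (realInnerSL.isBigO_id (𝓝 (0 : E)))
  refine this.congr (fun y ↦ ?_) (fun y ↦ one_smul ℝ y)
  ext w
  simp [normRpowHessian_apply]
  ring

theorem hasFDerivAt_fderiv_norm_rpow (hp : 2 ≤ p) (x : E) :
    HasFDerivAt (fderiv ℝ fun y : E ↦ ‖y‖ ^ p) (normRpowHessian p x) x := by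
  rcases eq_or_ne x 0 with rfl | hx
  · exact hasFDerivAt_fderiv_norm_rpow_zero hp
  · exact hasFDerivAt_fderiv_norm_rpow_of_ne_zero (by linarith) hx

theorem norm_smul_smulRight_innerSL_le (hp : 2 ≤ p) (x : E) :
    ‖(p * (p - 2) * ‖x‖ ^ (p - 4)) • (innerSL ℝ x).smulRight (innerSL ℝ x)‖ ≤
      p * ((p - 2) * ‖x‖ ^ (p - 2)) := by
  have hc : 0 ≤ p * (p - 2) * ‖x‖ ^ (p - 4) := by
    have : 0 ≤ p - 2 := by linarith
    positivity
  refine ContinuousLinearMap.opNorm_le_bound₂ _ (by positivity) fun v w ↦ ?_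
  simp only [smul_apply, ContinuousLinearMap.smulRight_apply, coe_innerSL_apply, smul_eq_mul,
    Real.norm_eq_abs, abs_mul, abs_of_nonneg hc]
  calc _ ≤ p * (p - 2) * ‖x‖ ^ (p - 4) * ((‖x‖ * ‖v‖) * (‖x‖ * ‖w‖)) := by
        gcongr <;> exact abs_real_inner_le_norm _ _
    _ = p * ((p - 2) * ‖x‖ ^ (p - 2)) * ‖v‖ * ‖w‖ := by
        linear_combination (p * ‖v‖ * ‖w‖) * sub_two_mul_rpow_sub_four_mul_sq (norm_nonneg x) p

set_option synthInstance.maxHeartbeats 100000 in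
theorem continuous_normRpowHessian (hp : 2 ≤ p) : Continuous (normRpowHessian (E := E) p) := by
  have hp' : 0 ≤ p - 2 := sub_nonneg.2 hp
  have hfirst : Continuous fun x : E ↦ (p * ‖x‖ ^ (p - 2)) • realInnerSL (E := E) := by
    fun_prop (discharger := simp [hp'])
  have hQ : Continuous fun x : E ↦ (innerSL ℝ x).smulRight (innerSL ℝ x) :=
    (ContinuousLinearMap.smulRightL ℝ E (E →L[ℝ] ℝ)).continuous₂.comp
      ((innerSL ℝ).continuous.prodMk (innerSL ℝ).continuous)
  -- instance search does not find `ContinuousAdd` on spaces of bilinear maps by itself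
  have : ContinuousAdd (E →L[ℝ] E →L[ℝ] ℝ) :=
    (inferInstance : IsTopologicalAddGroup (E →L[ℝ] E →L[ℝ] ℝ)).toContinuousAdd
  refine hfirst.add (continuous_iff_continuousAt.2 fun x ↦ ?_)
  rcases eq_or_ne x 0 with rfl | hx
  · have hlim : Tendsto (fun x : E ↦ p * ((p - 2) * ‖x‖ ^ (p - 2))) (𝓝 0) (𝓝 0) := by
      have hcont : Continuous fun x : E ↦ p * ((p - 2) * ‖x‖ ^ (p - 2)) := by
        fun_prop (discharger := simp [hp'])
      simpa [← sub_two_mul_rpow_sub_four_mul_sq le_rfl p] using hcont.tendsto 0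
    have hS0 : (p * (p - 2) * ‖(0 : E)‖ ^ (p - 4)) •
        (innerSL ℝ (0 : E)).smulRight (innerSL ℝ (0 : E)) = 0 := by
      ext v w
      simp
    rw [ContinuousAt, hS0]
    exact squeeze_zero_norm
      (f := fun x : E ↦ (p * (p - 2) * ‖x‖ ^ (p - 4)) • (innerSL ℝ x).smulRight (innerSL ℝ x))
      (norm_smul_smulRight_innerSL_le hp) hlim
  · exact ContinuousAt.smul (f := fun x : E ↦ p * (p - 2) * ‖x‖ ^ (p - 4))
      (by fun_prop (discharger := simp [hx])) hQ.continuousAt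

theorem contDiff_two_norm_rpow (hp : 2 ≤ p) : ContDiff ℝ 2 fun x : E ↦ ‖x‖ ^ p :=
  contDiff_succ_iff_hasFDerivAt.2 ⟨fderiv ℝ fun x : E ↦ ‖x‖ ^ p,
    contDiff_one_iff_hasFDerivAt.2
      ⟨_, continuous_normRpowHessian hp, hasFDerivAt_fderiv_norm_rpow hp⟩,
    fun x ↦ hasFDerivAt_norm_rpow x (by linarith) |>.differentiableAt.hasFDerivAt⟩

theorem iteratedFDeriv_two_norm_rpow (hp : 2 ≤ p) (x v : E) :
    iteratedFDeriv ℝ 2 (fun x : E ↦ ‖x‖ ^ p) x ![v, v] =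
      p * ‖x‖ ^ (p - 2) * ‖v‖ ^ 2 + p * (p - 2) * ‖x‖ ^ (p - 4) * ⟪x, v⟫ ^ 2 := by
  rw [iteratedFDeriv_two_apply, (hasFDerivAt_fderiv_norm_rpow hp x).fderiv]
  simp [normRpowHessian_apply, sq]

theorem iteratedFDeriv_two_norm_rpow_le (hp : 2 ≤ p) (x v : E) :
    iteratedFDeriv ℝ 2 (fun x : E ↦ ‖x‖ ^ p) x ![v, v] ≤ p * (p - 1) * ‖x‖ ^ (p - 2) * ‖v‖ ^ 2 := by
  have hp' : 0 ≤ p - 2 := sub_nonneg.2 hp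
  have hcs : ⟪x, v⟫ ^ 2 ≤ ‖x‖ ^ 2 * ‖v‖ ^ 2 := by
    rw [← mul_pow, ← sq_abs]
    gcongr
    exact abs_real_inner_le_norm x v
  rw [iteratedFDeriv_two_norm_rpow hp]
  calc _ ≤ p * ‖x‖ ^ (p - 2) * ‖v‖ ^ 2 + p * (p - 2) * ‖x‖ ^ (p - 4) * (‖x‖ ^ 2 * ‖v‖ ^ 2) := by
        gcongr
    _ = p * (p - 1) * ‖x‖ ^ (p - 2) * ‖v‖ ^ 2 := by
        linear_combination (p * ‖v‖ ^ 2) * sub_two_mul_rpow_sub_four_mul_sq (norm_nonneg x) p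

end NormRpow

theorem Complex.real_inner_eq_re_mul_conj (φ v : ℂ) : ⟪φ, v⟫ = (φ * conj v).re := by
  rw [Complex.inner, ← Complex.conj_re, map_mul, Complex.conj_conj, mul_comm]

/-- The map `z ↦ |z|^p` on `ℂ ≅ ℝ²` is `C²` for `p ≥ 2`; its Hessian quadratic form at `φ`
in direction `v` equals `p|φ|^{p-2}|v|² + p(p-2)|φ|^{p-4}(Re(φ v̄))²` (second term interpreted
as `0` when `φ = 0`), and is bounded above by `p(p-1)|φ|^{p-2}|v|²`. -/
theorem hessian_of_abs_rpow (p : ℝ) (hp : 2 ≤ p) :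
    ContDiff ℝ 2 (fun z : ℂ => ‖z‖ ^ p) ∧
    ∀ φ v : ℂ,
      iteratedFDeriv ℝ 2 (fun z : ℂ => ‖z‖ ^ p) φ ![v, v] =
        p * ‖φ‖ ^ (p - 2) * ‖v‖ ^ 2 +
          (if φ = 0 then 0
            else p * (p - 2) * ‖φ‖ ^ (p - 4) * ((φ * (starRingEnd ℂ) v).re) ^ 2) ∧
      iteratedFDeriv ℝ 2 (fun z : ℂ => ‖z‖ ^ p) φ ![v, v] ≤
        p * (p - 1) * ‖φ‖ ^ (p - 2) * ‖v‖ ^ 2 := by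
  refine ⟨contDiff_two_norm_rpow hp, fun φ v ↦ ⟨?_, iteratedFDeriv_two_norm_rpow_le hp φ v⟩⟩
  rw [iteratedFDeriv_two_norm_rpow hp, Complex.real_inner_eq_re_mul_conj]
  split_ifs with hφ
  · simp [hφ]
  · rfl
end

section
/- Let g : ℝ → ℝ be continuously differentiable, and let (t_j)_{j∈ℤ}, (s_j)_{j∈ℤ} be real sequences with |t_j - j| < 1/4 for all j, Σ_j |g'(s_j)|² ≤ B‖g‖²_{L²} for some B (with s_j between j and t_j given by the mean value theorem applied to g on [min(j,t_j), max(j,t_j)]), and suppose there exists C > 0 with |t_j² - j²| ≤ C for all j ≠ 0. Then Σ_{j≠0} |g(t_j) - g(j)| ≤ 2√B ‖g‖_{L²} (Σ_{j≠0} C²/j²)^{1/2} < ∞; in particular the series Σ_{j≠0} (g(t_j) - g(j)) converges absolutely. -/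
open MeasureTheory

/-- Absolute convergence of `Σ (g(t_j) - g(j))`: if `|t_j - j| < 1/4`, the mean-value points
`s_j` satisfy `Σ |g'(s_j)|² ≤ B‖g‖²_{L²}` and `|t_j² - j²| ≤ C` for `j ≠ 0`, then
`Σ_{j≠0} |g(t_j) - g(j)| ≤ 2√B ‖g‖_{L²} (Σ_{j≠0} C²/j²)^{1/2} < ∞`. -/
theorem sampling_series_absolutely_convergent (g : ℝ → ℝ) (hg : ContDiff ℝ 1 g)
    (t s : ℤ → ℝ) (B C : ℝ) (hB : 0 ≤ B) (hC : 0 < C)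
    (ht : ∀ j : ℤ, |t j - j| < 1 / 4)
    (hs : ∀ j : ℤ, s j ∈ Set.uIcc (j : ℝ) (t j) ∧
      g (t j) - g j = deriv g (s j) * (t j - j))
    (hsum : Summable fun j : {j : ℤ // j ≠ 0} => (deriv g (s j)) ^ 2)
    (hBsum : (∑' j : {j : ℤ // j ≠ 0}, (deriv g (s j)) ^ 2) ≤ B * ∫ x : ℝ, (g x) ^ 2)
    (htj : ∀ j : ℤ, j ≠ 0 → |(t j) ^ 2 - (j : ℝ) ^ 2| ≤ C) :
    Summable (fun j : {j : ℤ // j ≠ 0} => |g (t j) - g j|) ∧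
    (∑' j : {j : ℤ // j ≠ 0}, |g (t j) - g j|) ≤
      2 * Real.sqrt B * Real.sqrt (∫ x : ℝ, (g x) ^ 2) *
        Real.sqrt (∑' j : {j : ℤ // j ≠ 0}, C ^ 2 / ((j : ℝ)) ^ 2) := by
  classical
  set ι := {j : ℤ // j ≠ 0}
  set a : ι → ℝ := fun j => |deriv g (s j)| with ha
  set b : ι → ℝ := fun j => 2 * C / |(j : ℝ)| with hb
  set I : ℝ := ∫ x : ℝ, (g x) ^ 2 with hI
  have hInn : 0 ≤ I := integral_nonneg fun x => sq_nonneg _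
  -- pointwise bound
  have key : ∀ j : ι, |g (t j) - g j| ≤ a j * b j := by
    rintro ⟨j, hj⟩
    have h1 : (1 : ℝ) ≤ |(j : ℝ)| := by
      rw [← Int.cast_abs]
      exact_mod_cast Int.one_le_abs (by simpa using hj)
    have hjpos : (0 : ℝ) < |(j : ℝ)| := lt_of_lt_of_le one_pos h1
    have h2 : |(j : ℝ)| ≤ |t j + j| := by
      have : |t j + j| ≥ |2 * (j : ℝ)| - |t j - j| := by
        have := abs_sub_abs_le_abs_sub (2 * (j : ℝ)) (-(t j - j))
        simp only [abs_neg] at this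
        calc |2 * (j : ℝ)| - |t j - j| ≤ |2 * (j : ℝ) - -(t j - j)| := this
          _ = |t j + j| := by ring_nf
      have h4 := ht j
      have : |2 * (j : ℝ)| = 2 * |(j : ℝ)| := by rw [abs_mul]; norm_num
      nlinarith [abs_nonneg (t j - j)]
    have h3 : |t j - j| * |(j : ℝ)| ≤ C := by
      calc |t j - j| * |(j : ℝ)| ≤ |t j - j| * |t j + j| :=
            mul_le_mul_of_nonneg_left h2 (abs_nonneg _)
        _ = |(t j) ^ 2 - (j : ℝ) ^ 2| := by rw [← abs_mul]; ring_nf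
        _ ≤ C := htj j hj
    have h5 : |t j - j| ≤ 2 * C / |(j : ℝ)| := by
      rw [le_div_iff₀ hjpos]
      nlinarith
    have := (hs j).2
    calc |g (t j) - g j| = |deriv g (s j)| * |t j - j| := by rw [this, abs_mul]
      _ ≤ |deriv g (s j)| * (2 * C / |(j : ℝ)|) :=
          mul_le_mul_of_nonneg_left h5 (abs_nonneg _)
  -- summability of b²
  have hbsq : Summable fun j : ι => b j ^ 2 := by
    have h0 : Summable fun n : ℤ => 1 / (n : ℝ) ^ 2 :=
      Real.summable_one_div_int_pow.mpr one_lt_two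
    have h1 : Summable fun j : ι => 1 / ((j : ℤ) : ℝ) ^ 2 := h0.subtype _
    have := h1.mul_left (4 * C ^ 2)
    refine this.congr fun j => ?_
    simp only [hb, div_pow, mul_pow, sq_abs]
    ring
  have hCsq : Summable fun j : ι => C ^ 2 / ((j : ℤ) : ℝ) ^ 2 := by
    have h0 : Summable fun n : ℤ => 1 / (n : ℝ) ^ 2 :=
      Real.summable_one_div_int_pow.mpr one_lt_two
    have h1 : Summable fun j : ι => 1 / ((j : ℤ) : ℝ) ^ 2 := h0.subtype _
    refine (h1.mul_left (C ^ 2)).congr fun j => ?_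
    ring
  set K : ℝ := ∑' j : ι, C ^ 2 / ((j : ℤ) : ℝ) ^ 2 with hK
  have hKnn : 0 ≤ K := tsum_nonneg fun j => div_nonneg (sq_nonneg _) (sq_nonneg _)
  have hbtsum : (∑' j : ι, b j ^ 2) = 4 * K := by
    rw [hK, ← tsum_mul_left]
    refine tsum_congr fun j => ?_
    simp only [hb, div_pow, mul_pow, sq_abs]
    ring
  set A : ℝ := ∑' j : ι, (deriv g (s j)) ^ 2 with hA
  have hAnn : 0 ≤ A := tsum_nonneg fun j => sq_nonneg _
  -- partial sum bound
  have hRHSnn : 0 ≤ 2 * Real.sqrt B * Real.sqrt I * Real.sqrt K := by positivity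
  have hpartial : ∀ F : Finset ι, ∑ j ∈ F, |g (t j) - g j| ≤
      2 * Real.sqrt B * Real.sqrt I * Real.sqrt K := by
    intro F
    have h1 : ∑ j ∈ F, |g (t j) - g j| ≤ ∑ j ∈ F, a j * b j :=
      Finset.sum_le_sum fun j _ => key j
    have h2 : (∑ j ∈ F, a j * b j) ^ 2 ≤ (∑ j ∈ F, a j ^ 2) * ∑ j ∈ F, b j ^ 2 :=
      Finset.sum_mul_sq_le_sq_mul_sq F a b
    have ha2 : ∑ j ∈ F, a j ^ 2 ≤ A := by
      rw [hA]
      calc ∑ j ∈ F, a j ^ 2 = ∑ j ∈ F, (deriv g (s j)) ^ 2 := by simp [ha, sq_abs]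
        _ ≤ _ := Summable.sum_le_tsum F (fun j _ => sq_nonneg _) hsum
    have hb2 : ∑ j ∈ F, b j ^ 2 ≤ 4 * K := by
      rw [← hbtsum]
      exact Summable.sum_le_tsum F (fun j _ => sq_nonneg _) hbsq
    have hprod : (∑ j ∈ F, a j * b j) ^ 2 ≤ (B * I) * (4 * K) := by
      refine h2.trans ?_
      have hAle : A ≤ B * I := hBsum
      refine mul_le_mul (ha2.trans hAle) hb2 ?_ (by positivity)
      exact Finset.sum_nonneg fun j _ => sq_nonneg _
    have habnn : 0 ≤ ∑ j ∈ F, a j * b j :=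
      Finset.sum_nonneg fun j _ => mul_nonneg (abs_nonneg _)
        (div_nonneg (by positivity) (abs_nonneg _))
    have h3 : ∑ j ∈ F, a j * b j ≤ Real.sqrt ((B * I) * (4 * K)) := by
      rw [← Real.sqrt_sq habnn]
      exact Real.sqrt_le_sqrt hprod
    have h4 : Real.sqrt ((B * I) * (4 * K)) = 2 * Real.sqrt B * Real.sqrt I * Real.sqrt K := by
      rw [show (B * I) * (4 * K) = 4 * (B * (I * K)) by ring,
        Real.sqrt_mul (by norm_num : (0:ℝ) ≤ 4), Real.sqrt_mul hB,
        Real.sqrt_mul hInn, show Real.sqrt 4 = 2 by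
          rw [show (4:ℝ) = 2^2 by norm_num, Real.sqrt_sq (by norm_num)]]
      ring
    exact h1.trans (h3.trans_eq h4)
  have hSummable : Summable fun j : ι => |g (t j) - g j| :=
    summable_of_sum_le (fun j => abs_nonneg _) hpartial
  exact ⟨hSummable, Summable.tsum_le_of_sum_le hSummable hpartial⟩
end
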